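/- arXiv:1903.06861 — 2 statements merged into one kernel-verified Lean document; each statement's English description precedes it below -/
import Mathlib

section
/- Let α₁,…,α₆ be the E₆ simple roots in ℝ⁸ as above, V = span(α₁,…,α₆), and for each i let ζᵢ be the unique vector in V with ⟨ζᵢ, αⱼ⟩ = δᵢⱼ. Then the vector Λ = ζ₃ + ζ₅ + ζ₆ satisfies ‖Λ‖² = 58/3. In particular ‖Λ‖² < 30 = ‖ρ_c‖² where ρ_c = (0,1,2,3,4,0,0,0). -/
/-!
Λ is determined inside the span of the simple roots by its pairings (0,0,1,0,1,1) with them: a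
vector of that span orthogonal to every simple root is zero. Since the Gram matrix of the simple
roots is the Cartan matrix C of E₆, this forces Λ = ∑ cᵢ αᵢ with c = C⁻¹ (0,0,1,0,1,1) =
(11/3, 5, 22/3, 10, 23/3, 13/3), and then ‖Λ‖² = ∑ cᵢ ⟨Λ, αᵢ⟩ = c₃ + c₅ + c₆ = 58/3.
-/

open Matrix

noncomputable section

/-- The simple roots of E₆ in Bourbaki order, in ℝ⁸. -/
def e6α : Fin 6 → (Fin 8 → ℝ)
  | 0 => ![1/2, -1/2, -1/2, -1/2, -1/2, -1/2, -1/2, 1/2]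
  | 1 => ![1, 1, 0, 0, 0, 0, 0, 0]
  | 2 => ![-1, 1, 0, 0, 0, 0, 0, 0]
  | 3 => ![0, -1, 1, 0, 0, 0, 0, 0]
  | 4 => ![0, 0, -1, 1, 0, 0, 0, 0]
  | 5 => ![0, 0, 0, -1, 1, 0, 0, 0]

theorem Matrix.eq_of_mem_span_of_forall_dotProduct_eq {R ι n : Type*} [CommRing R]
    [LinearOrder R] [IsStrictOrderedRing R] [Fintype n] {v : ι → n → R} {x y : n → R}
    (hx : x ∈ Submodule.span R (Set.range v)) (hy : y ∈ Submodule.span R (Set.range v))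
    (h : ∀ j, x ⬝ᵥ v j = y ⬝ᵥ v j) : x = y := by
  have hperp : Submodule.span R (Set.range v) ≤ LinearMap.ker (dotProductBilin R R (x - y)) :=
    Submodule.span_le.mpr <| Set.range_subset_iff.mpr fun j => by simp [h j]
  have hself : (x - y) ⬝ᵥ (x - y) = 0 := hperp (Submodule.sub_mem _ hx hy)
  exact sub_eq_zero.mp (dotProduct_self_eq_zero.mp hself)

theorem e6α_dotProduct_e6α (i j : Fin 6) : e6α i ⬝ᵥ e6α j = CartanMatrix.E₆ i j := by
  fin_cases i <;> fin_cases j <;> norm_num [e6α, CartanMatrix.E₆, dotProduct, Fin.sum_univ_succ]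

def e6ΛCoeff : Fin 6 → ℝ := ![11/3, 5, 22/3, 10, 23/3, 13/3]

theorem sum_smul_e6α_dotProduct (j : Fin 6) :
    (∑ i, e6ΛCoeff i • e6α i) ⬝ᵥ e6α j = ![0, 0, 1, 0, 1, 1] j := by
  simp only [sum_dotProduct, smul_dotProduct, e6α_dotProduct_e6α, smul_eq_mul]
  fin_cases j <;> norm_num [Fin.sum_univ_succ, e6ΛCoeff, CartanMatrix.E₆]

/-- If ζ₁,…,ζ₆ are the fundamental weights of E₆ (dual basis in the span of
the simple roots), then Λ = ζ₃ + ζ₅ + ζ₆ has ‖Λ‖² = 58/3 < 30 = ‖ρ_c‖². -/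
theorem norm_sq_of_001011 (ζ : Fin 6 → (Fin 8 → ℝ))
    (hmem : ∀ i, ζ i ∈ Submodule.span ℝ (Set.range e6α))
    (hdual : ∀ i j, ζ i ⬝ᵥ e6α j = if i = j then 1 else 0) :
    (ζ 2 + ζ 4 + ζ 5) ⬝ᵥ (ζ 2 + ζ 4 + ζ 5) = 58/3 ∧
    (ζ 2 + ζ 4 + ζ 5) ⬝ᵥ (ζ 2 + ζ 4 + ζ 5) <
      (![0, 1, 2, 3, 4, 0, 0, 0] : Fin 8 → ℝ) ⬝ᵥ ![0, 1, 2, 3, 4, 0, 0, 0] ∧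
    (![0, 1, 2, 3, 4, 0, 0, 0] : Fin 8 → ℝ) ⬝ᵥ ![0, 1, 2, 3, 4, 0, 0, 0] = 30 := by
  set Λ := ζ 2 + ζ 4 + ζ 5
  have hΛ : ∀ j, Λ ⬝ᵥ e6α j = ![0, 0, 1, 0, 1, 1] j := by
    intro j
    fin_cases j <;> simp [Λ, hdual]
  have hΛ_eq : Λ = ∑ i, e6ΛCoeff i • e6α i :=
    eq_of_mem_span_of_forall_dotProduct_eq
      (add_mem (add_mem (hmem 2) (hmem 4)) (hmem 5))
      ((Submodule.mem_span_range_iff_exists_fun ℝ).mpr ⟨_, rfl⟩)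
      fun j => (hΛ j).trans (sum_smul_e6α_dotProduct j).symm
  have hnorm : Λ ⬝ᵥ Λ = 58/3 := calc
    Λ ⬝ᵥ Λ = Λ ⬝ᵥ ∑ i, e6ΛCoeff i • e6α i := congrArg _ hΛ_eq
    _ = ∑ i, e6ΛCoeff i * ![0, 0, 1, 0, 1, 1] i := by
      simp only [dotProduct_sum, dotProduct_smul, hΛ, smul_eq_mul]
    _ = 58/3 := by norm_num [Fin.sum_univ_succ, e6ΛCoeff]
  have hρ : (![0, 1, 2, 3, 4, 0, 0, 0] : Fin 8 → ℝ) ⬝ᵥ ![0, 1, 2, 3, 4, 0, 0, 0] = 30 := by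
    norm_num [dotProduct, Fin.sum_univ_succ]
  exact ⟨hnorm, by rw [hnorm, hρ]; norm_num, hρ⟩
end
end

section
/- Let a,b,c,d,e ∈ ℤ≥0 and f ∈ ℤ satisfy −¾a − (5/4)b − (3/2)c − d − ½e + ¼f ∈ ℤ. Then, with ϖ₁,…,ϖ₅, ζ, ζ₁,…,ζ₆ as above, the vector a·ϖ₁ + ⋯ + e·ϖ₅ + (f/4)·ζ has all six coordinates in ℤ when expressed in the basis ζ₁,…,ζ₆ of span(α₁,…,α₆); i.e., it equals n₁ζ₁ + aζ₂ + bζ₃ + cζ₄ + dζ₅ + eζ₆ for some n₁ ∈ ℤ. -/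
open Matrix

noncomputable section

/-- The fundamental weights of the D₅ subsystem spanned by α₂,…,α₆. -/
def Wd5 : Fin 5 → (Fin 8 → ℝ)
  | 0 => ![1/2, 1/2, 1/2, 1/2, 1/2, 0, 0, 0]
  | 1 => ![-1/2, 1/2, 1/2, 1/2, 1/2, 0, 0, 0]
  | 2 => ![0, 0, 1, 1, 1, 0, 0, 0]
  | 3 => ![0, 0, 0, 1, 1, 0, 0, 0]
  | 4 => ![0, 0, 0, 0, 1, 0, 0, 0]

/-- Coordinates of the D₅ fundamental weights in the basis α₂,…,α₆ (the inverse
of the D₅ Cartan matrix). -/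
def Cd5 : Fin 5 → Fin 5 → ℝ
  | 0 => ![5/4, 3/4, 3/2, 1, 1/2]
  | 1 => ![3/4, 5/4, 3/2, 1, 1/2]
  | 2 => ![3/2, 3/2, 3, 2, 1]
  | 3 => ![1, 1, 2, 2, 1]
  | 4 => ![1/2, 1/2, 1, 1, 1]

/-- A vector in the span of a finite family that is orthogonal to every member
of the family is zero. -/
lemma eq_zero_of_mem_span_of_dot {k : ℕ} (v : Fin k → Fin 8 → ℝ) (w : Fin 8 → ℝ)
    (hmem : w ∈ Submodule.span ℝ (Set.range v)) (hdot : ∀ i, w ⬝ᵥ v i = 0) : w = 0 := by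
  obtain ⟨c, hc⟩ := (Submodule.mem_span_range_iff_exists_fun ℝ).mp hmem
  have hw : w ⬝ᵥ w = 0 := by
    calc w ⬝ᵥ w = (∑ i, c i • v i) ⬝ᵥ w := by rw [hc]
      _ = ∑ i, c i * (v i ⬝ᵥ w) := by
          simp only [dotProduct, Finset.sum_apply, Pi.smul_apply, smul_eq_mul,
            Finset.sum_mul, Finset.mul_sum, mul_assoc]
          rw [Finset.sum_comm]
      _ = 0 := Finset.sum_eq_zero fun i _ => by rw [dotProduct_comm, hdot, mul_zero]
  exact dotProduct_self_eq_zero.mp hw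

lemma Wd5_eq_sum : ∀ j, Wd5 j = ∑ i : Fin 5, Cd5 j i • e6α i.succ := by
  have h0 : (Fin.succ 0 : Fin 6) = 1 := rfl
  have h1 : (Fin.succ 1 : Fin 6) = 2 := rfl
  have h2 : (Fin.succ 2 : Fin 6) = 3 := rfl
  have h3 : (Fin.succ 3 : Fin 6) = 4 := rfl
  have h4 : (Fin.succ 4 : Fin 6) = 5 := rfl
  intro j
  fin_cases j <;>
    simp [Wd5, Cd5, e6α, Fin.sum_univ_five, h0, h1, h2, h3, h4, funext_iff,
      Fin.forall_fin_succ, Matrix.smul_cons, Matrix.cons_add_cons] <;> norm_num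

lemma Wd5_mem (j : Fin 5) :
    Wd5 j ∈ Submodule.span ℝ (Set.range fun i : Fin 5 => e6α i.succ) := by
  rw [Wd5_eq_sum]
  exact Submodule.sum_mem _ fun i _ =>
    Submodule.smul_mem _ _ (Submodule.subset_span ⟨i, rfl⟩)

lemma Wd5_dot (j i : Fin 5) : Wd5 j ⬝ᵥ e6α i.succ = if i = j then 1 else 0 := by
  have h0 : (Fin.succ 0 : Fin 6) = 1 := rfl
  have h1 : (Fin.succ 1 : Fin 6) = 2 := rfl
  have h2 : (Fin.succ 2 : Fin 6) = 3 := rfl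
  have h3 : (Fin.succ 3 : Fin 6) = 4 := rfl
  have h4 : (Fin.succ 4 : Fin 6) = 5 := rfl
  fin_cases j <;> fin_cases i <;>
    simp [Wd5, e6α, dotProduct, Fin.sum_univ_succ, h0, h1, h2, h3, h4] <;> norm_num

/-- If a,…,e are nonnegative integers, f is an integer, and
−¾a − (5/4)b − (3/2)c − d − ½e + ¼f is an integer, then
aϖ₁ + ⋯ + eϖ₅ + (f/4)ζ has integer coordinates in the basis ζ₁,…,ζ₆. -/
theorem integral_coordinates (ζ : Fin 6 → (Fin 8 → ℝ)) (ϖ : Fin 5 → (Fin 8 → ℝ))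
    (hζmem : ∀ i, ζ i ∈ Submodule.span ℝ (Set.range e6α))
    (hζ : ∀ i j, ζ i ⬝ᵥ e6α j = if i = j then 1 else 0)
    (hϖmem : ∀ j, ϖ j ∈ Submodule.span ℝ (Set.range fun i : Fin 5 => e6α i.succ))
    (hϖ : ∀ (j i : Fin 5), ϖ j ⬝ᵥ e6α i.succ = if i = j then 1 else 0)
    (hζ1 : ζ 0 = ![0, 0, 0, 0, 0, -2/3, -2/3, 2/3])
    (a b c d e : ℤ) (f : ℤ)
    (ha : 0 ≤ a) (hb : 0 ≤ b) (hc : 0 ≤ c) (hd : 0 ≤ d) (he : 0 ≤ e)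
    (hint : ∃ n : ℤ,
      -(3/4) * (a : ℝ) - (5/4) * b - (3/2) * c - d - (1/2) * e + (1/4) * f = n) :
    ∃ n₁ : ℤ,
      (a : ℝ) • ϖ 0 + (b : ℝ) • ϖ 1 + (c : ℝ) • ϖ 2 + (d : ℝ) • ϖ 3 +
        (e : ℝ) • ϖ 4 + ((f : ℝ)/4) • ζ 0 =
      (n₁ : ℝ) • ζ 0 + (a : ℝ) • ζ 1 + (b : ℝ) • ζ 2 + (c : ℝ) • ζ 3 +
        (d : ℝ) • ζ 4 + (e : ℝ) • ζ 5 := by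
  obtain ⟨n, hn⟩ := hint
  -- each ϖ j is the explicit vector Wd5 j
  have hϖW : ∀ j, ϖ j = Wd5 j := by
    intro j
    have hz : ϖ j - Wd5 j = 0 := by
      refine eq_zero_of_mem_span_of_dot (fun i : Fin 5 => e6α i.succ) _
        (sub_mem (hϖmem j) (Wd5_mem j)) fun i => ?_
      rw [sub_dotProduct, hϖ j i, Wd5_dot j i, sub_self]
    exact sub_eq_zero.mp hz
  have hϖmem' : ∀ j, ϖ j ∈ Submodule.span ℝ (Set.range e6α) := fun j =>
    Submodule.span_mono (by rintro x ⟨i, rfl⟩; exact ⟨i.succ, rfl⟩) (hϖmem j)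
  refine ⟨n, ?_⟩
  have hz : ((a : ℝ) • ϖ 0 + (b : ℝ) • ϖ 1 + (c : ℝ) • ϖ 2 + (d : ℝ) • ϖ 3 +
      (e : ℝ) • ϖ 4 + ((f : ℝ)/4) • ζ 0) -
      ((n : ℝ) • ζ 0 + (a : ℝ) • ζ 1 + (b : ℝ) • ζ 2 + (c : ℝ) • ζ 3 +
      (d : ℝ) • ζ 4 + (e : ℝ) • ζ 5) = 0 := by
    refine eq_zero_of_mem_span_of_dot e6α _ ?_ fun i => ?_
    · refine sub_mem ?_ ?_
      · exact add_mem (add_mem (add_mem (add_mem (add_mem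
          (Submodule.smul_mem _ _ (hϖmem' 0)) (Submodule.smul_mem _ _ (hϖmem' 1)))
          (Submodule.smul_mem _ _ (hϖmem' 2))) (Submodule.smul_mem _ _ (hϖmem' 3)))
          (Submodule.smul_mem _ _ (hϖmem' 4))) (Submodule.smul_mem _ _ (hζmem 0))
      · exact add_mem (add_mem (add_mem (add_mem (add_mem
          (Submodule.smul_mem _ _ (hζmem 0)) (Submodule.smul_mem _ _ (hζmem 1)))
          (Submodule.smul_mem _ _ (hζmem 2))) (Submodule.smul_mem _ _ (hζmem 3)))
          (Submodule.smul_mem _ _ (hζmem 4))) (Submodule.smul_mem _ _ (hζmem 5))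
    · simp only [hϖW, sub_dotProduct, add_dotProduct,
        smul_dotProduct, smul_eq_mul, hζ]
      fin_cases i <;>
        simp [Wd5, e6α, dotProduct, Fin.sum_univ_succ] <;>
        linarith [hn]
  exact sub_eq_zero.mp hz
end
end
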